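/- A choice rule C is nonwasteful and promotes b-targeting diversity if and only if ξ(C(S)) ∈ F_b(ξ(S)) for every set of students S. -/
import Mathlib


open Finset

/-- `x` majorizes `y`: for each `k`, the sum of the `k` largest coordinates of `x`
is at least that of `y`, and the total sums agree.  (Stated via the equivalent
subset formulation.) -/
def maj {n : ℕ} (x y : Fin n → ℝ) : Prop :=
  (∀ B : Finset (Fin n), ∃ A : Finset (Fin n),
      A.card = B.card ∧ ∑ i ∈ B, y i ≤ ∑ i ∈ A, x i) ∧
  ∑ i, x i = ∑ i, y i

/-- strict majorization -/
def smaj {n : ℕ} (x y : Fin n → ℝ) : Prop := maj x y ∧ ¬ maj y x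

/-- The biased transformation `T_b(x) = x + (Σ_i x_i)·b`. -/
noncomputable def Tb {n : ℕ} (b : Fin n → ℝ) (x : Fin n → ℤ) : Fin n → ℝ :=
  fun i => (x i : ℝ) + (∑ j, (x j : ℝ)) * b i

/-- The budget set `B(x)` for capacity `q`. -/
def memB {n : ℕ} (q : ℕ) (x y : Fin n → ℤ) : Prop :=
  (∀ i, 0 ≤ y i) ∧ (∀ i, y i ≤ x i) ∧ ∑ i, y i ≤ (q : ℤ)

/-- The `b`-targeting Schur frontier `F_b(x)`. -/
def memF {n : ℕ} (q : ℕ) (b : Fin n → ℝ) (x y : Fin n → ℤ) : Prop :=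
  memB q x y ∧
    ¬ ∃ z : Fin n → ℤ, memB q x z ∧ ((y ≤ z ∧ y ≠ z) ∨ smaj (Tb b y) (Tb b z))


/-- The type-count vector of a finite set of typed students. -/
def xi {σ : Type} [DecidableEq σ] {n : ℕ} (typ : σ → Fin n) (R : Finset σ) :
    Fin n → ℤ :=
  fun i => ((R.filter fun s => typ s = i).card : ℤ)


lemma maj_refl {n : ℕ} (u : Fin n → ℝ) : maj u u :=
  ⟨fun B => ⟨B, rfl, le_refl _⟩, rfl⟩

noncomputable def stepv {n : ℕ} (u : Fin n → ℝ) (i j : Fin n) : Fin n → ℝ :=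
  fun k => u k + (if k = j then 1 else 0) - (if k = i then 1 else 0)

lemma sum_stepv {n : ℕ} (u : Fin n → ℝ) (i j : Fin n) (B : Finset (Fin n)) :
    ∑ k ∈ B, stepv u i j k
      = (∑ k ∈ B, u k) + (if j ∈ B then 1 else 0) - (if i ∈ B then 1 else 0) := by
  simp [stepv, Finset.sum_add_distrib, Finset.sum_sub_distrib, Finset.sum_ite_eq']

-- claim 1
lemma sum_le_top {n : ℕ} (u : Fin n → ℝ) (i : Fin n) (A : Finset (Fin n))
    (hcard : A.card = (univ.filter fun k => u i ≤ u k).card) :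
    ∑ k ∈ A, u k ≤ ∑ k ∈ univ.filter (fun k => u i ≤ u k), u k := by
  set B := univ.filter (fun k => u i ≤ u k) with hB
  have hc : (A \ B).card = (B \ A).card := by
    have h1 := Finset.card_inter_add_card_sdiff A B
    have h2 := Finset.card_inter_add_card_sdiff B A
    rw [Finset.inter_comm] at h2
    omega
  have h1 : ∑ k ∈ A \ B, u k ≤ (A \ B).card • u i := by
    apply Finset.sum_le_card_nsmul
    intro k hk
    have := (Finset.mem_sdiff.1 hk).2
    simp only [hB, Finset.mem_filter, Finset.mem_univ, true_and] at this
    linarith [not_le.1 this]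
  have h2 : (B \ A).card • u i ≤ ∑ k ∈ B \ A, u k := by
    apply Finset.card_nsmul_le_sum
    intro k hk
    have := (Finset.mem_sdiff.1 hk).1
    simp only [hB, Finset.mem_filter, Finset.mem_univ, true_and] at this
    exact this
  have e1 := Finset.sum_inter_add_sum_sdiff A B u
  have e2 := Finset.sum_inter_add_sum_sdiff B A u
  rw [Finset.inter_comm] at e2
  rw [hc] at h1
  linarith

lemma sum_lt_top_of_notmem {n : ℕ} (u : Fin n → ℝ) (i : Fin n) (A : Finset (Fin n))
    (hcard : A.card = (univ.filter fun k => u i ≤ u k).card) (hiA : i ∉ A) :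
    ∑ k ∈ A, u k < ∑ k ∈ univ.filter (fun k => u i ≤ u k), u k := by
  set B := univ.filter (fun k => u i ≤ u k) with hB
  have hiB : i ∈ B := by simp [hB]
  have hc : (A \ B).card = (B \ A).card := by
    have h1 := Finset.card_inter_add_card_sdiff A B
    have h2 := Finset.card_inter_add_card_sdiff B A
    rw [Finset.inter_comm] at h2
    omega
  have hBA : (B \ A).Nonempty := ⟨i, Finset.mem_sdiff.2 ⟨hiB, hiA⟩⟩
  have hABne : (A \ B).Nonempty := by
    rw [← Finset.card_pos] at hBA ⊢
    omega
  have h1 : ∑ k ∈ A \ B, u k < (A \ B).card • u i := by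
    have := Finset.sum_lt_sum_of_nonempty hABne (f := u) (g := fun _ => u i) ?_
    · simpa [Finset.sum_const] using this
    · intro k hk
      have := (Finset.mem_sdiff.1 hk).2
      simp only [hB, Finset.mem_filter, Finset.mem_univ, true_and] at this
      exact not_le.1 this
  have h2 : (B \ A).card • u i ≤ ∑ k ∈ B \ A, u k := by
    apply Finset.card_nsmul_le_sum
    intro k hk
    have := (Finset.mem_sdiff.1 hk).1
    simp only [hB, Finset.mem_filter, Finset.mem_univ, true_and] at this
    exact this
  have e1 := Finset.sum_inter_add_sum_sdiff A B u
  have e2 := Finset.sum_inter_add_sum_sdiff B A u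
  rw [Finset.inter_comm] at e2
  rw [hc] at h1
  linarith

lemma sum_lt_top_of_mem_j {n : ℕ} (u : Fin n → ℝ) (i j : Fin n) (A : Finset (Fin n))
    (hcard : A.card = (univ.filter fun k => u i ≤ u k).card) (hjA : j ∈ A)
    (hgap : u j + 1 < u i) :
    ∑ k ∈ A, u k < (∑ k ∈ univ.filter (fun k => u i ≤ u k), u k) - 1 := by
  set B := univ.filter (fun k => u i ≤ u k) with hB
  have hjB : j ∉ B := by
    simp only [hB, Finset.mem_filter, Finset.mem_univ, true_and]
    linarith
  have hc : (A \ B).card = (B \ A).card := by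
    have h1 := Finset.card_inter_add_card_sdiff A B
    have h2 := Finset.card_inter_add_card_sdiff B A
    rw [Finset.inter_comm] at h2
    omega
  have hjAB : j ∈ A \ B := Finset.mem_sdiff.2 ⟨hjA, hjB⟩
  have h1 : ∑ k ∈ (A \ B).erase j, u k ≤ ((A \ B).erase j).card • u i := by
    apply Finset.sum_le_card_nsmul
    intro k hk
    have := (Finset.mem_sdiff.1 (Finset.mem_of_mem_erase hk)).2
    simp only [hB, Finset.mem_filter, Finset.mem_univ, true_and] at this
    linarith [not_le.1 this]
  have hsplit : ∑ k ∈ A \ B, u k = u j + ∑ k ∈ (A \ B).erase j, u k :=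
    (Finset.add_sum_erase _ u hjAB).symm
  have hcard' : (B \ A).card = ((A \ B).erase j).card + 1 := by
    rw [Finset.card_erase_of_mem hjAB]
    have : 0 < (A \ B).card := Finset.card_pos.2 ⟨j, hjAB⟩
    omega
  have h2 : (B \ A).card • u i ≤ ∑ k ∈ B \ A, u k := by
    apply Finset.card_nsmul_le_sum
    intro k hk
    have := (Finset.mem_sdiff.1 hk).1
    simp only [hB, Finset.mem_filter, Finset.mem_univ, true_and] at this
    exact this
  rw [hcard', succ_nsmul] at h2
  have e1 := Finset.sum_inter_add_sum_sdiff A B u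
  have e2 := Finset.sum_inter_add_sum_sdiff B A u
  rw [Finset.inter_comm] at e2
  linarith

lemma smaj_stepv {n : ℕ} {u : Fin n → ℝ} {i j : Fin n} (h : u j + 1 < u i) :
    smaj u (stepv u i j) := by
  have hij : i ≠ j := by intro e; rw [e] at h; linarith
  have hiu : i ∈ (univ : Finset (Fin n)) := Finset.mem_univ i
  have hju : j ∈ (univ : Finset (Fin n)) := Finset.mem_univ j
  have hsums : ∑ k, u k = ∑ k, stepv u i j k := by
    rw [sum_stepv]; simp [hiu, hju]
  constructor
  · constructor
    · intro B
      by_cases hjB : j ∈ B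
      · by_cases hiB : i ∈ B
        · exact ⟨B, rfl, by rw [sum_stepv]; simp [hiB, hjB]⟩
        · refine ⟨insert i (B.erase j), ?_, ?_⟩
          · rw [Finset.card_insert_of_notMem (fun hx => hiB (Finset.mem_of_mem_erase hx)),
              Finset.card_erase_of_mem hjB]
            have : 0 < B.card := Finset.card_pos.2 ⟨j, hjB⟩
            omega
          · rw [sum_stepv, Finset.sum_insert (fun hx => hiB (Finset.mem_of_mem_erase hx)),
              Finset.sum_erase_eq_sub hjB]
            simp only [hjB, hiB, if_true, if_false]
            linarith
      · refine ⟨B, rfl, ?_⟩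
        rw [sum_stepv]
        simp only [hjB, if_false]
        split <;> linarith
    · exact hsums
  · rintro ⟨hmaj, -⟩
    obtain ⟨A, hA, hle⟩ := hmaj (univ.filter fun k => u i ≤ u k)
    rw [sum_stepv] at hle
    by_cases hjA : j ∈ A
    · have := sum_lt_top_of_mem_j u i j A hA hjA h
      simp only [hjA, if_true] at hle
      split at hle <;> linarith
    · by_cases hiA : i ∈ A
      · have := sum_le_top u i A hA
        simp only [hjA, hiA, if_true, if_false] at hle
        linarith
      · have := sum_lt_top_of_notmem u i A hA hiA
        simp only [hjA, hiA, if_false] at hle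
        linarith


lemma maj_thresh {n : ℕ} {u v : Fin n → ℝ} (h : maj u v) (s : ℝ) :
    ∑ k, max (v k - s) 0 ≤ ∑ k, max (u k - s) 0 := by
  set B := univ.filter (fun k => 0 < v k - s) with hB
  have h1 : ∑ k, max (v k - s) 0 = ∑ k ∈ B, (v k - s) := by
    rw [hB, Finset.sum_filter]
    apply Finset.sum_congr rfl
    intro k _
    rcases lt_or_ge 0 (v k - s) with hc | hc
    · simp [hc, max_eq_left hc.le]
    · simp [not_lt.2 hc, max_eq_right hc]
  obtain ⟨A, hA, hle⟩ := h.1 B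
  have h2 : ∑ k ∈ B, (v k - s) ≤ ∑ k ∈ A, (u k - s) := by
    rw [Finset.sum_sub_distrib, Finset.sum_sub_distrib, Finset.sum_const, Finset.sum_const, hA]
    linarith
  have h3 : ∑ k ∈ A, (u k - s) ≤ ∑ k ∈ A, max (u k - s) 0 :=
    Finset.sum_le_sum fun k _ => le_max_left _ _
  have h4 : ∑ k ∈ A, max (u k - s) 0 ≤ ∑ k, max (u k - s) 0 :=
    Finset.sum_le_sum_of_subset_of_nonneg (Finset.subset_univ A)
      (fun k _ _ => le_max_right _ _)
  linarith


lemma exists_step {n : ℕ} {u : Fin n → ℝ} {d : Fin n → ℤ} (hsum : ∑ k, d k = 0)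
    (h : smaj u (fun k => u k - (d k : ℝ))) :
    ∃ i j, 0 < d i ∧ d j < 0 ∧ smaj u (stepv u i j) := by
  set v : Fin n → ℝ := fun k => u k - (d k : ℝ) with hv
  have hne : ∃ k, d k ≠ 0 := by
    by_contra hc
    push_neg at hc
    apply h.2
    have : v = u := by funext k; simp [hv, hc k]
    rw [this]; exact maj_refl u
  set P := univ.filter (fun k => 0 < d k) with hP
  set N := univ.filter (fun k => d k < 0) with hN
  have hPne : P.Nonempty := by
    by_contra hc
    rw [Finset.not_nonempty_iff_eq_empty, hP, Finset.filter_eq_empty_iff] at hc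
    obtain ⟨k0, hk0⟩ := hne
    have hnp : ∀ k ∈ (univ : Finset (Fin n)), d k ≤ 0 := fun k _ => not_lt.1 (hc (mem_univ k))
    have : ∀ k ∈ (univ : Finset (Fin n)), -d k = 0 := by
      rw [← Finset.sum_eq_zero_iff_of_nonneg (fun k hk => neg_nonneg.2 (hnp k hk))]
      simp [hsum]
    have := this k0 (mem_univ k0); omega
  have hNne : N.Nonempty := by
    by_contra hc
    rw [Finset.not_nonempty_iff_eq_empty, hN, Finset.filter_eq_empty_iff] at hc
    obtain ⟨k0, hk0⟩ := hne
    have hnp : ∀ k ∈ (univ : Finset (Fin n)), 0 ≤ d k := fun k _ => not_lt.1 (hc (mem_univ k))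
    have := (Finset.sum_eq_zero_iff_of_nonneg hnp).1 hsum k0 (mem_univ k0)
    omega
  obtain ⟨i, hiP, hiMax⟩ := P.exists_max_image u hPne
  obtain ⟨j, hjN, hjMin⟩ := N.exists_min_image u hNne
  have hdi : 0 < d i := (Finset.mem_filter.1 hiP).2
  have hdj : d j < 0 := (Finset.mem_filter.1 hjN).2
  by_cases hgap : u j + 1 < u i
  · exact ⟨i, j, hdi, hdj, smaj_stepv hgap⟩
  exfalso
  push_neg at hgap
  set t := u j with ht
  have hPub : ∀ k, 0 < d k → u k ≤ t + 1 := by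
    intro k hk
    exact le_trans (hiMax k (Finset.mem_filter.2 ⟨mem_univ k, hk⟩)) hgap
  have hNlb : ∀ k, d k < 0 → t ≤ u k := by
    intro k hk
    exact hjMin k (Finset.mem_filter.2 ⟨mem_univ k, hk⟩)
  -- first threshold
  have hth1 := maj_thresh h.1 t
  have hkey : ∀ k, (-(d k) : ℝ) ≤ max (v k - t) 0 - max (u k - t) 0 := by
    intro k
    rcases lt_trichotomy (d k) 0 with hk | hk | hk
    · have h1 : t ≤ u k := hNlb k hk
      have h2 : (1 : ℝ) ≤ -(d k) := by
        have h2' : (1:ℤ) ≤ -d k := by omega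
        exact_mod_cast h2'
      have h3 : v k - t = (u k - t) + (-(d k)) := by simp [hv]; ring
      rw [max_eq_left (by linarith), max_eq_left (by linarith)]
      linarith
    · simp [hv, hk]
    · have h1 : u k ≤ t + 1 := hPub k hk
      have h2 : (1 : ℝ) ≤ d k := by exact_mod_cast hk
      have h3 : max (u k - t) 0 ≤ 1 := max_le (by linarith) (by linarith)
      have h4 : 0 ≤ max (v k - t) 0 := le_max_right _ _
      have h5 : (-(d k) : ℝ) ≤ -1 := by linarith
      linarith
  have hall : ∀ k, max (v k - t) 0 - max (u k - t) 0 = -(d k) := by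
    have hzs : ∑ k, ((max (v k - t) 0 - max (u k - t) 0) - (-(d k) : ℝ)) = 0 := by
      have hle : ∑ k, ((max (v k - t) 0 - max (u k - t) 0) - (-(d k) : ℝ)) ≤ 0 := by
        have e1 : ∑ k, ((max (v k - t) 0 - max (u k - t) 0) - (-(d k) : ℝ))
            = (∑ k, max (v k - t) 0) - (∑ k, max (u k - t) 0) + ((∑ k, (d k : ℝ))) := by
          simp only [sub_neg_eq_add, Finset.sum_add_distrib, Finset.sum_sub_distrib]
        have e2 : (∑ k, (d k : ℝ)) = 0 := by
          rw [← Int.cast_sum, hsum]; simp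
        rw [e1, e2]; linarith
      have hge : ∀ k ∈ (univ : Finset (Fin n)),
          0 ≤ (max (v k - t) 0 - max (u k - t) 0) - (-(d k) : ℝ) :=
        fun k _ => by linarith [hkey k]
      have := Finset.sum_le_sum hge
      simp only [Finset.sum_const_zero] at this
      linarith
    intro k
    have := (Finset.sum_eq_zero_iff_of_nonneg
      (fun k _ => by linarith [hkey k] :
        ∀ k ∈ (univ : Finset (Fin n)), (0:ℝ) ≤ (max (v k - t) 0 - max (u k - t) 0) - (-(d k)))).1
      hzs k (mem_univ k)
    linarith
  have hPvals : ∀ k, 0 < d k → d k = 1 ∧ u k = t + 1 := by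
    intro k hk
    have h1 : u k ≤ t + 1 := hPub k hk
    have h2 : (1 : ℝ) ≤ d k := by exact_mod_cast hk
    have hvk : v k ≤ t := by simp only [hv]; linarith
    have hmax0 : max (v k - t) 0 = 0 := max_eq_right (by linarith)
    have := hall k
    rw [hmax0] at this
    have hmu : max (u k - t) 0 = (d k : ℝ) := by linarith
    have hd1 : (d k : ℝ) ≤ 1 := by
      rw [← hmu]; exact max_le (by linarith) (by linarith)
    have hd1' : d k = 1 := by
      have : d k ≤ 1 := by exact_mod_cast hd1
      omega
    refine ⟨hd1', ?_⟩
    rw [hd1'] at hmu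
    simp only [Int.cast_one] at hmu
    rcases max_cases (u k - t) (0:ℝ) with ⟨he, _⟩ | ⟨he, _⟩ <;> rw [he] at hmu <;> linarith
  -- second threshold
  have hth2 := maj_thresh h.1 (t + 1)
  have hkey2 : ∀ k, 0 ≤ max (v k - (t+1)) 0 - max (u k - (t+1)) 0 := by
    intro k
    rcases lt_trichotomy (d k) 0 with hk | hk | hk
    · have h1 : t ≤ u k := hNlb k hk
      have h2 : (1 : ℝ) ≤ -(d k) := by
        have h2' : (1:ℤ) ≤ -d k := by omega
        exact_mod_cast h2'
      have h3 : v k = u k + (-(d k)) := by simp [hv]; ring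
      have h4 : t + 1 ≤ v k := by linarith
      rw [max_eq_left (by linarith)]
      rcases le_or_gt (u k) (t+1) with hc | hc
      · rw [max_eq_right (by linarith)]; linarith
      · rw [max_eq_left (by linarith)]; linarith
    · simp [hv, hk]
    · obtain ⟨_, hu⟩ := hPvals k hk
      have h2 : (1 : ℝ) ≤ d k := by exact_mod_cast hk
      have hvk : v k ≤ t := by simp only [hv]; linarith
      rw [max_eq_right (by linarith : u k - (t+1) ≤ 0), max_eq_right (by linarith : v k - (t+1) ≤ 0)]
      norm_num
  have hall2 : ∀ k, max (v k - (t+1)) 0 - max (u k - (t+1)) 0 = 0 := by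
    have hzs : ∑ k, (max (v k - (t+1)) 0 - max (u k - (t+1)) 0) = 0 := by
      have hle : ∑ k, (max (v k - (t+1)) 0 - max (u k - (t+1)) 0) ≤ 0 := by
        rw [Finset.sum_sub_distrib]; linarith
      have hge := Finset.sum_le_sum (fun k (_ : k ∈ (univ : Finset (Fin n))) => hkey2 k)
      simp only [Finset.sum_const_zero] at hge
      linarith
    intro k
    exact (Finset.sum_eq_zero_iff_of_nonneg
      (fun k _ => hkey2 k)).1 hzs k (mem_univ k)
  have hNvals : ∀ k, d k < 0 → d k = -1 ∧ u k = t := by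
    intro k hk
    have h1 : t ≤ u k := hNlb k hk
    have h2 : (1 : ℝ) ≤ -(d k) := by
      have h2' : (1:ℤ) ≤ -d k := by omega
      exact_mod_cast h2'
    have h3 : v k = u k + (-(d k)) := by simp [hv]; ring
    have h4 : t + 1 ≤ v k := by linarith
    have := hall2 k
    rw [max_eq_left (by linarith)] at this
    have hmu : max (u k - (t+1)) 0 = v k - (t+1) := by linarith
    have huk : u k ≤ t + 1 := by
      by_contra hc
      push_neg at hc
      rw [max_eq_left (by linarith)] at hmu
      linarith
    rw [max_eq_right (by linarith)] at hmu
    have hvk : v k = t + 1 := by linarith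
    have hdk : (d k : ℝ) = u k - (t+1) := by rw [← hvk]; simp [hv]
    have hdge : (-1 : ℝ) ≤ (d k : ℝ) := by linarith
    have hdm1 : d k = -1 := by
      have : (-1 : ℤ) ≤ d k := by exact_mod_cast hdge
      omega
    refine ⟨hdm1, ?_⟩
    rw [hdm1] at hdk
    simp only [Int.cast_neg, Int.cast_one] at hdk
    linarith
  -- card equality
  have hPd : ∀ k ∈ P, d k = 1 := fun k hk => (hPvals k (Finset.mem_filter.1 hk).2).1
  have hNd : ∀ k ∈ N, d k = -1 := fun k hk => (hNvals k (Finset.mem_filter.1 hk).2).1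
  have hdisj : Disjoint P N := by
    rw [Finset.disjoint_left]
    intro k hk hk'
    simp only [hP, hN, Finset.mem_filter, mem_univ, true_and] at hk hk'
    omega
  have hPNsum : ∑ k ∈ P ∪ N, d k = 0 := by
    rw [← hsum]
    apply Finset.sum_subset (Finset.subset_univ _)
    intro k _ hk
    simp only [Finset.mem_union, hP, hN, Finset.mem_filter, mem_univ, true_and, not_or] at hk
    omega
  have hcardPN : P.card = N.card := by
    have e1 : ∑ k ∈ P, d k = P.card := by
      rw [Finset.sum_congr rfl hPd]; simp
    have e2 : ∑ k ∈ N, d k = -(N.card : ℤ) := by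
      rw [Finset.sum_congr rfl hNd]; simp
    have e3 : ∑ k ∈ P ∪ N, d k = ∑ k ∈ P, d k + ∑ k ∈ N, d k :=
      Finset.sum_union hdisj
    rw [e1, e2] at e3
    rw [hPNsum] at e3
    omega
  -- permutation
  set e := Finset.equivOfCardEq hcardPN with he
  classical
  set f : Fin n → Fin n := fun k =>
    if hk : k ∈ P then (e ⟨k, hk⟩ : Fin n)
    else if hk' : k ∈ N then (e.symm ⟨k, hk'⟩ : Fin n) else k with hf
  have hfP : ∀ k (hk : k ∈ P), f k ∈ N := by
    intro k hk; simp only [hf, dif_pos hk]; exact (e ⟨k, hk⟩).2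
  have hfN : ∀ k (hk : k ∈ N), f k ∈ P := by
    intro k hk
    have hkP : k ∉ P := Finset.disjoint_right.1 hdisj hk
    simp only [hf, dif_neg hkP, dif_pos hk]
    exact (e.symm ⟨k, hk⟩).2
  have hvf : ∀ k, v (f k) = u k := by
    intro k
    by_cases hk : k ∈ P
    · have hfk := hfP k hk
      obtain ⟨hd', hu'⟩ := hNvals (f k) (Finset.mem_filter.1 hfk).2
      obtain ⟨_, hu''⟩ := hPvals k (Finset.mem_filter.1 hk).2
      simp only [hv]
      rw [hd', hu', hu'']
      simp
    · by_cases hk' : k ∈ N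
      · have hfk := hfN k hk'
        obtain ⟨hd', hu'⟩ := hPvals (f k) (Finset.mem_filter.1 hfk).2
        obtain ⟨_, hu''⟩ := hNvals k (Finset.mem_filter.1 hk').2
        simp only [hv]
        rw [hd', hu', hu'']
        simp
      · have hd0 : d k = 0 := by
          simp only [hP, hN, Finset.mem_filter, mem_univ, true_and] at hk hk'
          omega
        have : f k = k := by simp [hf, hk, hk']
        rw [this]
        simp [hv, hd0]
  have hinj : Function.Injective f := by
    intro a b hab
    by_cases ha : a ∈ P
    · have hfa := hfP a ha
      by_cases hb : b ∈ P
      · simp only [hf, dif_pos ha, dif_pos hb] at hab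
        have : e ⟨a, ha⟩ = e ⟨b, hb⟩ := Subtype.ext hab
        exact congrArg Subtype.val (e.injective this)
      · by_cases hb' : b ∈ N
        · have hfb := hfN b hb'
          rw [hab] at hfa
          exact absurd hfa (Finset.disjoint_left.1 hdisj hfb)
        · have : f b = b := by simp [hf, hb, hb']
          rw [this] at hab
          rw [hab] at hfa
          exact absurd hfa hb'
    · by_cases ha' : a ∈ N
      · have hfa := hfN a ha'
        by_cases hb : b ∈ P
        · have hfb := hfP b hb
          rw [hab] at hfa
          exact absurd hfa (Finset.disjoint_right.1 hdisj hfb)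
        · by_cases hb' : b ∈ N
          · have hbP : b ∉ P := Finset.disjoint_right.1 hdisj hb'
            simp only [hf, dif_neg ha, dif_pos ha', dif_neg hbP, dif_neg hb, dif_pos hb'] at hab
            have : e.symm ⟨a, ha'⟩ = e.symm ⟨b, hb'⟩ := Subtype.ext hab
            exact congrArg Subtype.val (e.symm.injective this)
          · have : f b = b := by simp [hf, hb, hb']
            rw [this] at hab
            rw [hab] at hfa
            exact absurd hfa hb
      · have hfa : f a = a := by simp [hf, ha, ha']
        by_cases hb : b ∈ P
        · have hfb := hfP b hb
          rw [hfa] at hab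
          rw [← hab] at hfb
          exact absurd hfb ha'
        · by_cases hb' : b ∈ N
          · have hfb := hfN b hb'
            rw [hfa] at hab
            rw [← hab] at hfb
            exact absurd hfb ha
          · have hfb : f b = b := by simp [hf, hb, hb']
            rw [hfa, hfb] at hab
            exact hab
  apply h.2
  constructor
  · intro B
    refine ⟨B.image f, Finset.card_image_of_injective B hinj, ?_⟩
    rw [Finset.sum_image (fun a _ b _ hab => hinj hab)]
    exact le_of_eq (Finset.sum_congr rfl fun k _ => (hvf k).symm)
  · exact h.1.2.symm


section XiLemmas

variable {σ : Type} [DecidableEq σ] {n : ℕ} (typ : σ → Fin n)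

lemma xi_nonneg (R : Finset σ) (i : Fin n) : 0 ≤ xi typ R i := Int.ofNat_nonneg _

lemma xi_mono {R T : Finset σ} (h : R ⊆ T) (i : Fin n) : xi typ R i ≤ xi typ T i := by
  simp only [xi]
  exact_mod_cast Finset.card_le_card (Finset.filter_subset_filter _ h)

lemma xi_sum (R : Finset σ) : ∑ i, xi typ R i = (R.card : ℤ) := by
  have := Finset.card_eq_sum_card_fiberwise (f := typ) (t := univ) (s := R)
    (fun x _ => Finset.mem_univ (typ x))
  simp only [xi]
  exact_mod_cast this.symm

lemma exists_typ {R : Finset σ} {i : Fin n} (h : 0 < xi typ R i) :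
    ∃ s ∈ R, typ s = i := by
  simp only [xi] at h
  have : 0 < (R.filter fun s => typ s = i).card := by exact_mod_cast h
  obtain ⟨s, hs⟩ := Finset.card_pos.1 this
  exact ⟨s, (Finset.mem_filter.1 hs).1, (Finset.mem_filter.1 hs).2⟩

lemma exists_typ_diff {Cs S : Finset σ} (hCS : Cs ⊆ S) {i : Fin n}
    (h : xi typ Cs i < xi typ S i) : ∃ s ∈ S, s ∉ Cs ∧ typ s = i := by
  by_contra hc
  push_neg at hc
  have hsub : (S.filter fun s => typ s = i) ⊆ (Cs.filter fun s => typ s = i) := by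
    intro x hx
    obtain ⟨hx1, hx2⟩ := Finset.mem_filter.1 hx
    by_cases hxc : x ∈ Cs
    · exact Finset.mem_filter.2 ⟨hxc, hx2⟩
    · exact absurd hx2 (hc x hx1 hxc)
  have := Finset.card_le_card hsub
  simp only [xi] at h
  have h' : (Cs.filter fun s => typ s = i).card < (S.filter fun s => typ s = i).card := by
    exact_mod_cast h
  omega

lemma xi_swap {R : Finset σ} {s s' : σ} (hs : s ∈ R) (hs' : s' ∉ R) (k : Fin n) :
    xi typ (insert s' (R.erase s)) k
      = xi typ R k + (if k = typ s' then 1 else 0) - (if k = typ s then 1 else 0) := by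
  simp only [xi]
  rw [Finset.filter_insert]
  have herase : Finset.filter (fun x => typ x = k) (R.erase s)
      = (Finset.filter (fun x => typ x = k) R).erase s := Finset.filter_erase _ _ _
  by_cases h1 : typ s' = k <;> by_cases h2 : typ s = k
  · rw [if_pos h1, herase]
    have hsmem : s ∈ Finset.filter (fun x => typ x = k) R := Finset.mem_filter.2 ⟨hs, h2⟩
    have hcpos : 0 < (Finset.filter (fun x => typ x = k) R).card := Finset.card_pos.2 ⟨s, hsmem⟩
    rw [Finset.card_insert_of_notMem
      (fun hx => hs' ((Finset.filter_subset _ _) (Finset.mem_of_mem_erase hx))),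
      Finset.card_erase_of_mem hsmem]
    rw [if_pos h1.symm, if_pos h2.symm]
    omega
  · rw [if_pos h1, herase]
    have hsmem : s ∉ Finset.filter (fun x => typ x = k) R := fun hx => h2 (Finset.mem_filter.1 hx).2
    rw [Finset.erase_eq_of_notMem hsmem,
      Finset.card_insert_of_notMem (fun hx => hs' ((Finset.filter_subset _ _) hx))]
    rw [if_pos h1.symm, if_neg (fun hx : k = typ s => h2 hx.symm)]
    omega
  · rw [if_neg h1, herase]
    have hsmem : s ∈ Finset.filter (fun x => typ x = k) R := Finset.mem_filter.2 ⟨hs, h2⟩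
    have hcpos : 0 < (Finset.filter (fun x => typ x = k) R).card := Finset.card_pos.2 ⟨s, hsmem⟩
    rw [Finset.card_erase_of_mem hsmem]
    rw [if_neg (fun hx : k = typ s' => h1 hx.symm), if_pos h2.symm]
    omega
  · rw [if_neg h1, herase]
    have hsmem : s ∉ Finset.filter (fun x => typ x = k) R := fun hx => h2 (Finset.mem_filter.1 hx).2
    rw [Finset.erase_eq_of_notMem hsmem]
    rw [if_neg (fun hx : k = typ s' => h1 hx.symm), if_neg (fun hx : k = typ s => h2 hx.symm)]
    omega

end XiLemmas


section Helpers
variable {σ : Type} [DecidableEq σ] {n : ℕ}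

lemma memB_xi (typ : σ → Fin n) {q : ℕ} {R S : Finset σ} (hRS : R ⊆ S)
    (hq : R.card ≤ q) : memB q (xi typ S) (xi typ R) := by
  refine ⟨xi_nonneg typ R, fun i => xi_mono typ hRS i, ?_⟩
  rw [xi_sum]
  exact_mod_cast hq

lemma Tb_sum {n : ℕ} {b : Fin n → ℝ} (hb : ∑ i, b i = 0) (w : Fin n → ℤ) :
    ∑ i, Tb b w i = ∑ i, (w i : ℝ) := by
  simp only [Tb, Finset.sum_add_distrib, ← Finset.mul_sum, hb, mul_zero, add_zero]

end Helpers

/-- A choice rule is nonwasteful and promotes `b`-targeting diversity iff it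
always selects a student body whose type distribution lies on the frontier. -/
theorem stmt18 {σ : Type} [DecidableEq σ] {n : ℕ} (q : ℕ) (hq : 0 < q)
    (b : Fin n → ℝ) (hb : ∑ i, b i = 0) (typ : σ → Fin n)
    (C : Finset σ → Finset σ) (hsub : ∀ S, C S ⊆ S)
    (hcard : ∀ S, (C S).card ≤ q) :
    ((∀ S : Finset σ, (C S).card = min q S.card) ∧
     (∀ S : Finset σ, ∀ s ∈ C S, ∀ s' ∈ S \ C S,
        ¬ smaj (Tb b (xi typ (C S))) (Tb b (xi typ (insert s' ((C S).erase s)))))) ↔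
    (∀ S : Finset σ, memF q b (xi typ S) (xi typ (C S))) := by
  constructor
  · rintro ⟨hNW, hswap⟩ S
    set x := xi typ S with hx
    set y := xi typ (C S) with hy
    refine ⟨memB_xi typ (hsub S) (hcard S), ?_⟩
    rintro ⟨z, hzB, hor⟩
    have hysum : ∑ i, y i = ((min q S.card : ℕ) : ℤ) := by
      rw [hy, xi_sum, hNW S]
    have hxsum : ∑ i, x i = (S.card : ℤ) := xi_sum typ S
    rcases hor with ⟨hle, hne⟩ | hsm
    · have hzq : ∑ i, z i ≤ (q : ℤ) := hzB.2.2
      have hzx : ∑ i, z i ≤ (S.card : ℤ) := by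
        rw [← hxsum]
        exact Finset.sum_le_sum fun i _ => hzB.2.1 i
      have hyz : ∑ i, y i < ∑ i, z i := by
        obtain ⟨k, hk⟩ : ∃ k, y k ≠ z k := by
          by_contra hc
          push_neg at hc
          exact hne (funext hc)
        exact Finset.sum_lt_sum (fun i _ => hle i)
          ⟨k, Finset.mem_univ k, lt_of_le_of_ne (hle k) hk⟩
      have hmin : ((min q S.card : ℕ) : ℤ) = min (q : ℤ) (S.card : ℤ) := by
        push_cast; rfl
      rw [hysum, hmin] at hyz
      have : ∑ i, z i ≤ min (q : ℤ) (S.card : ℤ) := le_min hzq hzx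
      linarith
    · -- strict majorization case
      have hsums := hsm.1.2
      rw [Tb_sum hb, Tb_sum hb] at hsums
      have hzy : ∑ i, z i = ∑ i, y i := by exact_mod_cast hsums.symm
      set d : Fin n → ℤ := fun k => y k - z k with hd
      have hdsum : ∑ k, d k = 0 := by
        simp only [hd, Finset.sum_sub_distrib, hzy, sub_self]
      have hvd : Tb b z = fun k => Tb b y k - (d k : ℝ) := by
        funext k
        simp only [Tb, hd]
        have : ∑ j, (z j : ℝ) = ∑ j, (y j : ℝ) := by exact_mod_cast hzy
        rw [this]
        push_cast
        ring
      rw [hvd] at hsm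
      obtain ⟨i, j, hdi, hdj, hstep⟩ := exists_step hdsum hsm
      have hyi : 0 < y i := by
        have := hzB.1 i
        simp only [hd] at hdi
        omega
      have hyx : y j < x j := by
        have h1 := hzB.2.1 j
        simp only [hd] at hdj
        omega
      obtain ⟨s, hsC, hstyp⟩ := exists_typ typ hyi
      obtain ⟨s', hs'S, hs'nC, hs'typ⟩ := exists_typ_diff typ (hsub S) hyx
      have hTbeq : Tb b (xi typ (insert s' ((C S).erase s))) = stepv (Tb b y) i j := by
        have hswapxi : ∀ k, xi typ (insert s' ((C S).erase s)) k
            = y k + (if k = j then 1 else 0) - (if k = i then 1 else 0) := by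
          intro k
          rw [xi_swap typ hsC hs'nC k, hstyp, hs'typ]
        have hsum' : ∑ k, xi typ (insert s' ((C S).erase s)) k = ∑ k, y k := by
          simp only [hswapxi, Finset.sum_add_distrib, Finset.sum_sub_distrib,
            Finset.sum_ite_eq', Finset.mem_univ, if_true]
          ring
        have hterm : ∀ l : Fin n,
            ((((y l + if l = j then 1 else 0) - if l = i then 1 else 0 : ℤ)) : ℝ)
              = (y l : ℝ) + (if l = j then (1:ℝ) else 0) - (if l = i then (1:ℝ) else 0) := by
          intro l; split_ifs <;> push_cast <;> ring
        have hsumeq : ∑ l, ((((y l + if l = j then 1 else 0) - if l = i then 1 else 0 : ℤ)) : ℝ)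
            = ∑ l, (y l : ℝ) := by
          rw [Finset.sum_congr rfl (fun l _ => hterm l), Finset.sum_sub_distrib,
            Finset.sum_add_distrib, Finset.sum_ite_eq', Finset.sum_ite_eq']
          simp
        funext k
        simp only [Tb, stepv, hswapxi]
        rw [hterm k, hsumeq]
        split_ifs <;> ring
      exact hswap S s hsC s' (Finset.mem_sdiff.2 ⟨hs'S, hs'nC⟩) (hTbeq ▸ hstep)
  · intro hF
    constructor
    · intro S
      have h1 : (C S).card ≤ q := hcard S
      have h2 : (C S).card ≤ S.card := Finset.card_le_card (hsub S)
      by_contra hne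
      have hlt : (C S).card < min q S.card :=
        lt_of_le_of_ne (le_min h1 h2) hne
      have hltq : (C S).card < q := lt_of_lt_of_le hlt (min_le_left _ _)
      have hltS : (C S).card < S.card := lt_of_lt_of_le hlt (min_le_right _ _)
      have hysum : ∑ i, xi typ (C S) i = ((C S).card : ℤ) := xi_sum typ (C S)
      have hxsum : ∑ i, xi typ S i = (S.card : ℤ) := xi_sum typ S
      obtain ⟨j, hj⟩ : ∃ j, xi typ (C S) j < xi typ S j := by
        by_contra hc
        push_neg at hc
        have : ∑ i, xi typ S i ≤ ∑ i, xi typ (C S) i :=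
          Finset.sum_le_sum fun i _ => hc i
        rw [hysum, hxsum] at this
        have : S.card ≤ (C S).card := by exact_mod_cast this
        omega
      classical
      apply (hF S).2
      refine ⟨fun k => xi typ (C S) k + (if k = j then 1 else 0), ⟨?_, ?_, ?_⟩,
        Or.inl ⟨?_, ?_⟩⟩
      · intro i
        have := xi_nonneg typ (C S) i
        show 0 ≤ xi typ (C S) i + (if i = j then 1 else 0)
        split <;> omega
      · intro i
        show xi typ (C S) i + (if i = j then 1 else 0) ≤ xi typ S i
        have := xi_mono typ (hsub S) i
        by_cases hij : i = j
        · subst hij; simp only [if_pos rfl]; omega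
        · simp only [if_neg hij, add_zero]; exact this
      · have heq : ∑ k, (xi typ (C S) k + (if k = j then 1 else 0))
            = (∑ k, xi typ (C S) k) + 1 := by
          simp only [Finset.sum_add_distrib, Finset.sum_ite_eq',
            Finset.mem_univ, if_true]
        rw [heq, hysum]
        omega
      · intro k
        show xi typ (C S) k ≤ xi typ (C S) k + (if k = j then 1 else 0)
        split <;> omega
      · intro hc
        have hthis : xi typ (C S) j = xi typ (C S) j + (if j = j then 1 else 0) :=
          congrFun hc j
        simp at hthis
    · intro S s hs s' hs' hsm
      obtain ⟨hs'S, hs'nC⟩ := Finset.mem_sdiff.1 hs'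
      apply (hF S).2
      refine ⟨xi typ (insert s' ((C S).erase s)), ?_, Or.inr hsm⟩
      apply memB_xi typ
      · exact Finset.insert_subset hs'S
          ((Finset.erase_subset _ _).trans (hsub S))
      · rw [Finset.card_insert_of_notMem
          (fun hc => hs'nC (Finset.mem_of_mem_erase hc)),
          Finset.card_erase_of_mem hs]
        have : 0 < (C S).card := Finset.card_pos.2 ⟨s, hs⟩
        have := hcard S
        omega
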